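/- For every k ≥ 1, the polynomial F_k ∈ ℂ[z_0,z_1,z_2,z_3] is invariant under every element of W, under ν, and under τ (hence under the group W̃ generated by W, ν and τ). -/

import Mathlib

open MvPolynomial

/-- The symmetric invariants `F_k = (1/6) Σ_{i<j} [(z_i - z_j)^{2k} + (z_i + z_j)^{2k}]`. -/
noncomputable def Fpoly (k : ℕ) : MvPolynomial (Fin 4) ℂ :=
  C (6⁻¹ : ℂ) *
    ∑ i : Fin 4, ∑ j : Fin 4,
      if i < j then (X i - X j) ^ (2 * k) + (X i + X j) ^ (2 * k) else 0

/-- The group `W` of even-signed permutations of coordinates, as a set of matrices: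
matrices of the maps `e_i ↦ ε_i e_{s(i)}` with `s ∈ S₄`, `ε_i = ±1`, `ε₀ε₁ε₂ε₃ = 1`. -/
def SignedPerm : Set (Matrix (Fin 4) (Fin 4) ℂ) :=
  { M | ∃ (s : Equiv.Perm (Fin 4)) (ε : Fin 4 → ℂ),
      (∀ i, ε i = 1 ∨ ε i = -1) ∧ ε 0 * ε 1 * ε 2 * ε 3 = 1 ∧
      ∀ i j, M i j = if i = s j then ε j else 0 }

/-- The matrix `ν = diag(1,1,1,-1)`. -/
noncomputable def nuMat : Matrix (Fin 4) (Fin 4) ℂ :=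
  Matrix.diagonal ![1, 1, 1, -1]

/-- The matrix `τ`. -/
noncomputable def tauMat : Matrix (Fin 4) (Fin 4) ℂ :=
  (2⁻¹ : ℂ) • Matrix.of
    ![![1, 1, 1, 1], ![1, 1, -1, -1], ![1, -1, -1, 1], ![1, -1, 1, -1]]

/-- A polynomial `f` is invariant under the linear map with matrix `M` if `f ∘ M = f`,
equivalently (over the infinite field `ℂ`) `f (M z) = f z` for all `z`. -/
def InvUnder (M : Matrix (Fin 4) (Fin 4) ℂ) (f : MvPolynomial (Fin 4) ℂ) : Prop :=
  ∀ z : Fin 4 → ℂ, eval (M.mulVec z) f = eval z f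

/-- The group `W̃`: the subgroup of `GL(4, ℂ)` generated by `W`, `ν` and `τ`. -/
noncomputable def tildeW : Subgroup (GL (Fin 4) ℂ) :=
  Subgroup.closure
    { g : GL (Fin 4) ℂ | (↑g : Matrix (Fin 4) (Fin 4) ℂ) ∈ SignedPerm ∨
        (↑g : Matrix (Fin 4) (Fin 4) ℂ) = nuMat ∨ (↑g : Matrix (Fin 4) (Fin 4) ℂ) = tauMat }

/-! `F_k` is, up to the factor `1/6`, the sum of `ℓ ^ (2 * k)` over the twelve linear forms
`ℓ = z i ± z j` with `i < j`. Signed permutations of the coordinates (among them the elements of `W`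
and `ν`) and `τ` permute these forms up to sign, which even powers do not see. Invariance is
preserved by products and inverses, so it passes from the generators to `W̃`. -/

open Matrix

theorem Finset.two_nsmul_sum_ite_lt {ι M : Type*} [Fintype ι] [LinearOrder ι] [AddCommGroup M]
    (g : ι → ι → M) (hg : ∀ i j, g i j = g j i) :
    2 • ∑ i, ∑ j, (if i < j then g i j else 0) = ∑ i, ∑ j, g i j - ∑ i, g i i := by
  have hsplit : ∀ i j, g i j =
      (if i < j then g i j else 0) + (if j < i then g j i else 0) + (if i = j then g i j else 0) := by
    intro i j
    rcases lt_trichotomy i j with h | rfl | h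
    · simp [h, h.not_gt, h.ne]
    · simp
    · simp [h, h.not_gt, h.ne', hg i j]
  have hswap : ∑ i, ∑ j, (if j < i then g j i else 0) = ∑ i, ∑ j, (if i < j then g i j else 0) :=
    Finset.sum_comm
  rw [eq_sub_iff_add_eq, two_nsmul]
  conv_rhs => rw [Finset.sum_congr rfl fun i _ => Finset.sum_congr rfl fun j _ => hsplit i j]
  simp only [Finset.sum_add_distrib, hswap, Finset.sum_ite_eq, Finset.mem_univ, if_true]

/-- Doubling turns the sum over `i < j` into the full sum minus the diagonal, and both of those
are visibly invariant under relabelling. -/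
theorem Finset.sum_ite_lt_comp_perm {ι M : Type*} [Fintype ι] [LinearOrder ι] [AddCommGroup M]
    [IsAddTorsionFree M] (g : ι → ι → M) (hg : ∀ i j, g i j = g j i) (σ : Equiv.Perm ι) :
    ∑ i, ∑ j, (if i < j then g (σ i) (σ j) else 0) = ∑ i, ∑ j, (if i < j then g i j else 0) := by
  apply nsmul_right_injective two_ne_zero
  simp only [Finset.two_nsmul_sum_ite_lt _ hg,
    Finset.two_nsmul_sum_ite_lt (fun i j => g (σ i) (σ j)) (fun i j => hg _ _)]
  rw [Equiv.sum_comp σ (fun i => ∑ j, g i (σ j)), Equiv.sum_comp σ (fun i => g i i)]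
  simp only [Equiv.sum_comp σ (g _)]

theorem Matrix.mulVec_eq_comp_symm {ι R : Type*} [Fintype ι] [DecidableEq ι] [CommSemiring R]
    {M : Matrix ι ι R} {s : Equiv.Perm ι} {ε : ι → R}
    (hM : ∀ i j, M i j = if i = s j then ε j else 0) (z : ι → R) :
    M *ᵥ z = (fun j => ε j * z j) ∘ s.symm := by
  ext i
  simp [mulVec, dotProduct, hM, ← Equiv.symm_apply_eq]

def pairPow (k : ℕ) (a b : ℂ) : ℂ := (a - b) ^ (2 * k) + (a + b) ^ (2 * k)

theorem pairPow_comm (k : ℕ) (a b : ℂ) : pairPow k a b = pairPow k b a := by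
  rw [pairPow, pairPow, ← neg_sub, Even.neg_pow (even_two_mul k), add_comm a]

theorem pairPow_neg_right (k : ℕ) (a b : ℂ) : pairPow k a (-b) = pairPow k a b := by
  rw [pairPow, pairPow, sub_neg_eq_add, ← sub_eq_add_neg, add_comm]

theorem pairPow_sign_mul {k : ℕ} {e e' : ℂ} (he : e = 1 ∨ e = -1) (he' : e' = 1 ∨ e' = -1)
    (a b : ℂ) : pairPow k (e * a) (e' * b) = pairPow k a b := by
  have hneg_left : pairPow k (-a) = pairPow k a := by
    ext b; rw [pairPow_comm, pairPow_neg_right, pairPow_comm]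
  rcases he with rfl | rfl <;> rcases he' with rfl | rfl <;>
    simp only [one_mul, neg_one_mul, pairPow_neg_right, hneg_left]

theorem eval_Fpoly (k : ℕ) (z : Fin 4 → ℂ) :
    eval z (Fpoly k) = 6⁻¹ * ∑ i, ∑ j, if i < j then pairPow k (z i) (z j) else 0 := by
  simp [Fpoly, pairPow, apply_ite (eval z)]

theorem eval_Fpoly_comp_perm (k : ℕ) (z : Fin 4 → ℂ) (σ : Equiv.Perm (Fin 4)) :
    eval (z ∘ σ) (Fpoly k) = eval z (Fpoly k) := by
  simp only [eval_Fpoly, Function.comp_apply,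
    Finset.sum_ite_lt_comp_perm (fun i j => pairPow k (z i) (z j)) (fun i j => pairPow_comm k _ _)]

theorem eval_Fpoly_sign_mul (k : ℕ) (z : Fin 4 → ℂ) {ε : Fin 4 → ℂ}
    (hε : ∀ i, ε i = 1 ∨ ε i = -1) :
    eval (fun i => ε i * z i) (Fpoly k) = eval z (Fpoly k) := by
  simp only [eval_Fpoly, pairPow_sign_mul (hε _) (hε _)]

theorem tauMat_mulVec (z : Fin 4 → ℂ) :
    tauMat *ᵥ z = ![(z 0 + z 1 + z 2 + z 3) / 2, (z 0 + z 1 - z 2 - z 3) / 2,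
      (z 0 - z 1 - z 2 + z 3) / 2, (z 0 - z 1 + z 2 - z 3) / 2] := by
  ext i; fin_cases i <;> simp [tauMat, mulVec, dotProduct, Fin.sum_univ_four] <;> ring

theorem Fpoly_invUnder_signedPerm (k : ℕ) {M : Matrix (Fin 4) (Fin 4) ℂ} (hM : M ∈ SignedPerm) :
    InvUnder M (Fpoly k) := by
  obtain ⟨s, ε, hε, -, hMε⟩ := hM
  intro z
  rw [mulVec_eq_comp_symm hMε, eval_Fpoly_comp_perm, eval_Fpoly_sign_mul k z hε]

theorem Fpoly_invUnder_nuMat (k : ℕ) : InvUnder nuMat (Fpoly k) := by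
  intro z
  rw [nuMat, funext (mulVec_diagonal _ z)]
  exact eval_Fpoly_sign_mul k z (by intro i; fin_cases i <;> simp)

/-- `τ` permutes the twelve forms `z i ± z j` up to sign; writing `ℓ ^ (2 * k)` as `(ℓ ^ 2) ^ k`
removes the signs, so that `ring_nf` can match the two sides. -/
theorem Fpoly_invUnder_tauMat (k : ℕ) : InvUnder tauMat (Fpoly k) := by
  intro z
  simp only [eval_Fpoly, Fin.sum_univ_four, Fin.reduceLT, lt_self_iff_false, ↓reduceIte,
    add_zero, zero_add, tauMat_mulVec, cons_val, pairPow, pow_mul]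
  ring_nf

def invariantSubgroup (f : MvPolynomial (Fin 4) ℂ) : Subgroup (GL (Fin 4) ℂ) where
  carrier := {g | InvUnder g f}
  one_mem' z := by rw [Units.val_one, one_mulVec]
  mul_mem' {g h} hg hh z := by rw [Units.val_mul, ← mulVec_mulVec, hg, hh]
  inv_mem' {g} hg z := by
    rw [← hg, mulVec_mulVec, ← Units.val_mul, mul_inv_cancel, Units.val_one, one_mulVec]

theorem mem_invariantSubgroup {f : MvPolynomial (Fin 4) ℂ} {g : GL (Fin 4) ℂ} :
    g ∈ invariantSubgroup f ↔ InvUnder g f :=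
  Iff.rfl

theorem Fpoly_invariant_general (k : ℕ) :
    (∀ M ∈ SignedPerm, InvUnder M (Fpoly k)) ∧
    InvUnder nuMat (Fpoly k) ∧
    InvUnder tauMat (Fpoly k) ∧
    (∀ g ∈ tildeW, InvUnder (↑g : Matrix (Fin 4) (Fin 4) ℂ) (Fpoly k)) := by
  refine ⟨fun M => Fpoly_invUnder_signedPerm k, Fpoly_invUnder_nuMat k, Fpoly_invUnder_tauMat k,
    fun g hg => (Subgroup.closure_le (invariantSubgroup (Fpoly k))).2 ?_ hg⟩
  rintro g (hg | hg | hg) <;> rw [SetLike.mem_coe, mem_invariantSubgroup]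
  · exact Fpoly_invUnder_signedPerm k hg
  · exact hg ▸ Fpoly_invUnder_nuMat k
  · exact hg ▸ Fpoly_invUnder_tauMat k

/-- For every `k ≥ 1`, the polynomial `F_k` is invariant under every element of `W`,
under `ν`, and under `τ` — hence under the group `W̃` generated by them. -/
theorem Fpoly_invariant (k : ℕ) (hk : 1 ≤ k) :
    (∀ M ∈ SignedPerm, InvUnder M (Fpoly k)) ∧
    InvUnder nuMat (Fpoly k) ∧
    InvUnder tauMat (Fpoly k) ∧
    (∀ g ∈ tildeW, InvUnder (↑g : Matrix (Fin 4) (Fin 4) ℂ) (Fpoly k)) :=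
  Fpoly_invariant_general k
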